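/- Column-correlation bound for the partial DFT design: for any m ≥ 3 and any 1 ≤ l ≤ m, one has Σ_{j=1}^m |b_l^H b_j| ≤ 4 log m, where b_1,…,b_m ∈ ℂ^K are the rows of the matrix B consisting of the first K columns of the m×m unitary DFT matrix. -/

import Mathlib

open MeasureTheory ProbabilityTheory Real Finset
open scoped ENNReal

noncomputable section

namespace BlindDeconv

/-- Conjugate inner product `uᴴ v`. -/
def cdot {K : ℕ} (u v : Fin K → ℂ) : ℂ := ∑ i, (starRingEnd ℂ) (u i) * v i

/-- Euclidean norm of a complex vector. -/
def vnorm {K : ℕ} (v : Fin K → ℂ) : ℝ := Real.sqrt (∑ i, ‖v i‖ ^ 2)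

/-- Frobenius norm of a matrix. -/
def fnorm {K : ℕ} (Z : Matrix (Fin K) (Fin K) ℂ) : ℝ :=
  Real.sqrt (∑ i, ∑ j, ‖Z i j‖ ^ 2)

/-- Spectral norm of a matrix. -/
def snorm {ι : Type} [Fintype ι] [DecidableEq ι] (Z : Matrix ι ι ℂ) : ℝ :=
  ‖Matrix.toEuclideanCLM (𝕜 := ℂ) Z‖

/-- Nuclear norm: the sum of singular values. -/
def nucnorm {K : ℕ} (Z : Matrix (Fin K) (Fin K) ℂ) : ℝ :=
  ∑ i, Real.sqrt ((Matrix.isHermitian_conjTranspose_mul_self Z).eigenvalues i)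

/-- Outer product `u vᴴ`. -/
def outer {K : ℕ} (u v : Fin K → ℂ) : Matrix (Fin K) (Fin K) ℂ :=
  Matrix.of fun i j => u i * (starRingEnd ℂ) (v j)

/-- Rows of the matrix consisting of the first `K` columns of the unitary `m × m` DFT matrix. -/
def dftB (m K : ℕ) : Fin m → Fin K → ℂ := fun j i =>
  (Real.sqrt m : ℂ)⁻¹ *
    Complex.exp (2 * (Real.pi : ℂ) * Complex.I * ((j : ℕ) : ℂ) * ((i : ℕ) : ℂ) / (m : ℂ))

/-- Standard complex Gaussian `N(0, 1/2) + i·N(0, 1/2)`. -/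
def stdCGaussian : Measure ℂ :=
  Measure.map (fun p : ℝ × ℝ => (p.1 : ℂ) + (p.2 : ℂ) * Complex.I)
    ((gaussianReal 0 (1 / 2)).prod (gaussianReal 0 (1 / 2)))

/-- Complex Gaussian with independent real and imaginary parts of variance `v` each. -/
def cGaussian (v : ℝ) : Measure ℂ :=
  Measure.map (fun p : ℝ × ℝ => (p.1 : ℂ) + (p.2 : ℂ) * Complex.I)
    ((gaussianReal 0 v.toNNReal).prod (gaussianReal 0 v.toNNReal))

/-- Law of a standard complex Gaussian vector in `ℂ^K`. -/
def stdGaussianVec (K : ℕ) : Measure (Fin K → ℂ) := Measure.pi fun _ => stdCGaussian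

/-- The design vectors `a j` are i.i.d. standard complex Gaussian. -/
def GaussianDesign (Ω : Type) [MeasurableSpace Ω] (P : Measure Ω) {K m : ℕ}
    (a : Ω → Fin m → Fin K → ℂ) : Prop :=
  Measurable a ∧ Measure.map a P = Measure.pi fun _ : Fin m => stdGaussianVec K

/-- Model assumption: i.i.d. standard complex Gaussian design, independent zero-mean
sub-Gaussian noise coordinates with laws `ν j` and sub-Gaussian parameter `σ`, noise
independent of the design. -/
def DesignNoise (Ω : Type) [MeasurableSpace Ω] (P : Measure Ω) {K m : ℕ}
    (a : Ω → Fin m → Fin K → ℂ) (ξ : Ω → Fin m → ℂ) (ν : Fin m → Measure ℂ) (σ : ℝ) : Prop :=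
  Measurable a ∧ Measurable ξ ∧ (∀ j, IsProbabilityMeasure (ν j)) ∧
    (∀ j, ∫ z, z ∂ν j = 0) ∧
    (∀ j, ∀ t : ℝ, 0 ≤ t →
      ν j {z : ℂ | t ≤ ‖z‖} ≤ ENNReal.ofReal (2 * Real.exp (-t ^ 2 / σ ^ 2))) ∧
    Measure.map (fun ω => (a ω, ξ ω)) P =
      (Measure.pi fun _ : Fin m => stdGaussianVec K).prod (Measure.pi ν)

/-- Incoherence: `|b_jᴴ h| ≤ (μ/√m) ‖h‖₂` for all `j`. -/
def Incoherent {K m : ℕ} (b : Fin m → Fin K → ℂ) (hs : Fin K → ℂ) (μ : ℝ) : Prop :=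
  ∀ j, ‖cdot (b j) hs‖ ≤ μ / Real.sqrt m * vnorm hs

/-- Observations `y_j = b_jᴴ h* x*ᴴ a_j + ξ_j`. -/
def yObs {K m : ℕ} (b a : Fin m → Fin K → ℂ) (ξ : Fin m → ℂ) (hs xs : Fin K → ℂ) :
    Fin m → ℂ :=
  fun j => cdot (b j) hs * cdot xs (a j) + ξ j

/-- Wirtinger gradient of the regularized loss w.r.t. `h`. -/
def gradH {K m : ℕ} (b a : Fin m → Fin K → ℂ) (y : Fin m → ℂ) (lam : ℝ)
    (h x : Fin K → ℂ) : Fin K → ℂ :=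
  fun i => (∑ j, (cdot (b j) h * cdot x (a j) - y j) * b j i * cdot (a j) x) + (lam : ℂ) * h i

/-- Wirtinger gradient of the regularized loss w.r.t. `x`. -/
def gradX {K m : ℕ} (b a : Fin m → Fin K → ℂ) (y : Fin m → ℂ) (lam : ℝ)
    (h x : Fin K → ℂ) : Fin K → ℂ :=
  fun i =>
    (∑ j, (starRingEnd ℂ) (cdot (b j) h * cdot x (a j) - y j) * a j i * cdot (b j) h) +
      (lam : ℂ) * x i

/-- Norm of the full Wirtinger gradient `∇f(h,x)`. -/
def gradNorm {K m : ℕ} (b a : Fin m → Fin K → ℂ) (y : Fin m → ℂ) (lam : ℝ)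
    (h x : Fin K → ℂ) : ℝ :=
  Real.sqrt ((vnorm (gradH b a y lam h x)) ^ 2 + (vnorm (gradX b a y lam h x)) ^ 2)

/-- The regularized nonconvex loss `f(h,x)`. -/
def loss {K m : ℕ} (b a : Fin m → Fin K → ℂ) (y : Fin m → ℂ) (lam : ℝ)
    (h x : Fin K → ℂ) : ℝ :=
  (∑ j, ‖cdot (b j) h * cdot x (a j) - y j‖ ^ 2) + lam * (vnorm h) ^ 2 + lam * (vnorm x) ^ 2

/-- The convex (nuclear-norm regularized) objective `g(Z)`. -/
def cvxObj {K m : ℕ} (b a : Fin m → Fin K → ℂ) (y : Fin m → ℂ) (lam : ℝ)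
    (Z : Matrix (Fin K) (Fin K) ℂ) : ℝ :=
  (∑ j, ‖cdot (b j) (Z.mulVec (a j)) - y j‖ ^ 2) + 2 * lam * nucnorm Z

/-- The matrix `M = Σ_j y_j b_j a_jᴴ` used for spectral initialization. -/
def specMat {K m : ℕ} (b a : Fin m → Fin K → ℂ) (y : Fin m → ℂ) :
    Matrix (Fin K) (Fin K) ℂ :=
  ∑ j, y j • outer (b j) (a j)

/-- The leave-one-out matrix `M^(l) = Σ_{j≠l} y_j b_j a_jᴴ`. -/
def specMatLoo {K m : ℕ} (l : Fin m) (b a : Fin m → Fin K → ℂ) (y : Fin m → ℂ) :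
    Matrix (Fin K) (Fin K) ℂ :=
  ∑ j ∈ Finset.univ.erase l, y j • outer (b j) (a j)

/-- Adjoint operator `A*(z) = Σ_j z_j b_j a_jᴴ`. -/
def opAstar {K m : ℕ} (b a : Fin m → Fin K → ℂ) (z : Fin m → ℂ) :
    Matrix (Fin K) (Fin K) ℂ :=
  ∑ j, z j • outer (b j) (a j)

/-- Operator `T(Z) = A*A(Z) = Σ_j b_j b_jᴴ Z a_j a_jᴴ`. -/
def calT {K m : ℕ} (b a : Fin m → Fin K → ℂ) (Z : Matrix (Fin K) (Fin K) ℂ) :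
    Matrix (Fin K) (Fin K) ℂ :=
  ∑ j, cdot (b j) (Z.mulVec (a j)) • outer (b j) (a j)

/-- Projection onto the tangent space of `h xᴴ`. -/
def projT {K : ℕ} (h x : Fin K → ℂ) (X : Matrix (Fin K) (Fin K) ℂ) :
    Matrix (Fin K) (Fin K) ℂ :=
  ((vnorm h) ^ 2)⁻¹ • (outer h h * X) + ((vnorm x) ^ 2)⁻¹ • (X * outer x x) -
    (((vnorm h) ^ 2 * (vnorm x) ^ 2)⁻¹) • (outer h h * X * outer x x)

/-- Projection onto the orthogonal complement of the tangent space of `h xᴴ`. -/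
def projTperp {K : ℕ} (h x : Fin K → ℂ) (X : Matrix (Fin K) (Fin K) ℂ) :
    Matrix (Fin K) (Fin K) ℂ :=
  (1 - ((vnorm h) ^ 2)⁻¹ • outer h h) * X * (1 - ((vnorm x) ^ 2)⁻¹ • outer x x)

/-- The cost `√(‖h/ᾱ − h*‖² + ‖αx − x*‖²)` of aligning `(h,x)` to `(h*,x*)` via `α`. -/
def alignCost {K : ℕ} (hs xs : Fin K → ℂ) (α : ℂ) (h x : Fin K → ℂ) : ℝ :=
  Real.sqrt ((vnorm (fun i => ((starRingEnd ℂ) α)⁻¹ * h i - hs i)) ^ 2 +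
    (vnorm (fun i => α * x i - xs i)) ^ 2)

/-- The distance `dist(z, z*)` modulo global scaling. -/
def distz {K : ℕ} (h x hs xs : Fin K → ℂ) : ℝ :=
  sInf ((fun α : ℂ => alignCost hs xs α h x) '' {α : ℂ | α ≠ 0})

/-- `α` is an optimal alignment of `(h,x)` to `(h*,x*)`. -/
def IsAlign {K : ℕ} (hs xs h x : Fin K → ℂ) (α : ℂ) : Prop :=
  α ≠ 0 ∧ alignCost hs xs α h x = distz h x hs xs

/-- Aligned `h` iterate `h̃ = h / ᾱ`. -/
def alH {K : ℕ} (α : ℂ) (h : Fin K → ℂ) : Fin K → ℂ :=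
  fun i => ((starRingEnd ℂ) α)⁻¹ * h i

/-- Aligned `x` iterate `x̃ = α x`. -/
def alX {K : ℕ} (α : ℂ) (x : Fin K → ℂ) : Fin K → ℂ := fun i => α * x i

/-- `(h0, x0)` is a spectral initialization computed from the matrix `M`: a scaled leading
singular pair of `M`. -/
def SpecInit {K : ℕ} (M : Matrix (Fin K) (Fin K) ℂ) (h0 x0 : Fin K → ℂ) : Prop :=
  ∃ hc xc : Fin K → ℂ,
    vnorm hc = 1 ∧ vnorm xc = 1 ∧
    M.mulVec xc = (fun i => (snorm M : ℂ) * hc i) ∧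
    M.conjTranspose.mulVec hc = (fun i => (snorm M : ℂ) * xc i) ∧
    h0 = (fun i => (Real.sqrt (snorm M) : ℂ) * hc i) ∧
    x0 = (fun i => (Real.sqrt (snorm M) : ℂ) * xc i)

/-- One iteration of (Wirtinger) gradient descent with stepsize `η` followed by the
balancing step, with explicit half-iterates. -/
def GDStepFull {K m : ℕ} (b a : Fin m → Fin K → ℂ) (y : Fin m → ℂ) (lam η : ℝ)
    (h x hH xH hN xN : Fin K → ℂ) : Prop :=
  hH = (fun i => h i - (η : ℂ) * gradH b a y lam h x i) ∧
  xH = (fun i => x i - (η : ℂ) * gradX b a y lam h x i) ∧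
  hN = (fun i => (Real.sqrt (vnorm xH / vnorm hH) : ℂ) * hH i) ∧
  xN = (fun i => (Real.sqrt (vnorm hH / vnorm xH) : ℂ) * xH i)

/-- One iteration of gradient descent plus balancing. -/
def GDStep {K m : ℕ} (b a : Fin m → Fin K → ℂ) (y : Fin m → ℂ) (lam η : ℝ)
    (h x hN xN : Fin K → ℂ) : Prop :=
  ∃ hH xH, GDStepFull b a y lam η h x hH xH hN xN

/-- Leave-one-out Wirtinger gradient w.r.t. `h` (the `l`-th sample deleted). -/
def gradHloo {K m : ℕ} (l : Fin m) (b a : Fin m → Fin K → ℂ) (y : Fin m → ℂ) (lam : ℝ)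
    (h x : Fin K → ℂ) : Fin K → ℂ :=
  fun i =>
    (∑ j ∈ Finset.univ.erase l, (cdot (b j) h * cdot x (a j) - y j) * b j i * cdot (a j) x) +
      (lam : ℂ) * h i

/-- Leave-one-out Wirtinger gradient w.r.t. `x` (the `l`-th sample deleted). -/
def gradXloo {K m : ℕ} (l : Fin m) (b a : Fin m → Fin K → ℂ) (y : Fin m → ℂ) (lam : ℝ)
    (h x : Fin K → ℂ) : Fin K → ℂ :=
  fun i =>
    (∑ j ∈ Finset.univ.erase l,
        (starRingEnd ℂ) (cdot (b j) h * cdot x (a j) - y j) * a j i * cdot (b j) h) +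
      (lam : ℂ) * x i

/-- One leave-one-out gradient descent iteration plus balancing. -/
def GDStepLoo {K m : ℕ} (l : Fin m) (b a : Fin m → Fin K → ℂ) (y : Fin m → ℂ) (lam η : ℝ)
    (h x hN xN : Fin K → ℂ) : Prop :=
  ∃ hH xH : Fin K → ℂ,
    hH = (fun i => h i - (η : ℂ) * gradHloo l b a y lam h x i) ∧
    xH = (fun i => x i - (η : ℂ) * gradXloo l b a y lam h x i) ∧
    hN = (fun i => (Real.sqrt (vnorm xH / vnorm hH) : ℂ) * hH i) ∧
    xN = (fun i => (Real.sqrt (vnorm hH / vnorm xH) : ℂ) * xH i)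

/-- The Wirtinger Hessian of the regularized loss, as a `4K × 4K` complex matrix. -/
def hessMat {K m : ℕ} (b a : Fin m → Fin K → ℂ) (y : Fin m → ℂ) (lam : ℝ)
    (h x : Fin K → ℂ) :
    Matrix ((Fin K ⊕ Fin K) ⊕ (Fin K ⊕ Fin K)) ((Fin K ⊕ Fin K) ⊕ (Fin K ⊕ Fin K)) ℂ :=
  let A11 : Matrix (Fin K) (Fin K) ℂ :=
    (∑ j, (‖cdot x (a j)‖ ^ 2 : ℝ) • outer (b j) (b j)) + (lam : ℂ) • 1
  let A12 : Matrix (Fin K) (Fin K) ℂ :=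
    ∑ j, (cdot (b j) h * cdot x (a j) - y j) • outer (b j) (a j)
  let A22 : Matrix (Fin K) (Fin K) ℂ :=
    (∑ j, (‖cdot (b j) h‖ ^ 2 : ℝ) • outer (a j) (a j)) + (lam : ℂ) • 1
  let Ablk := Matrix.fromBlocks A11 A12 A12.conjTranspose A22
  let B12 : Matrix (Fin K) (Fin K) ℂ :=
    ∑ j, (cdot (b j) h * cdot x (a j)) • outer (b j) (a j)
  let B21 : Matrix (Fin K) (Fin K) ℂ :=
    ∑ j, (cdot (a j) x * cdot h (b j)) • outer (a j) (b j)
  let Bblk := Matrix.fromBlocks (0 : Matrix (Fin K) (Fin K) ℂ) B12 B21 0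
  Matrix.fromBlocks Ablk Bblk Bblk.conjTranspose (Ablk.map (starRingEnd ℂ))


end BlindDeconv

/-!
The Gram entries of the partial DFT design are geometric sums:
`b_lᴴ b_j = m⁻¹ ∑_{i<K} ω^{(j-l)i}` with `ω = e^{2πi/m}`, so they depend only on
`d = j - l mod m`. The diagonal entry is `K/m ≤ 1`. For `0 < d < m` the geometric sum is at
most `2/|ω^d - 1| = 1/sin(πd/m)`, and Jordan's inequality in the form
`sin(πx) ≥ 2x(1-x)` bounds the entry by `1/(2d) + 1/(2(m-d))`. Summing over `d`, the two
halves both give `H_{m-1}/2`, so the total is at most `1 + H_{m-1} ≤ 2 + log m ≤ 4 log m`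
as soon as `log m ≥ 1`, i.e. `m ≥ 3`.
-/

theorem norm_geom_sum_le_of_norm_eq_one {z : ℂ} (hz : ‖z‖ = 1) (hz1 : z ≠ 1) (n : ℕ) :
    ‖∑ i ∈ range n, z ^ i‖ ≤ 2 / ‖z - 1‖ := by
  rw [geom_sum_eq hz1, norm_div]
  gcongr
  calc ‖z ^ n - 1‖ ≤ ‖z ^ n‖ + ‖(1 : ℂ)‖ := norm_sub_le _ _
    _ = 2 := by rw [norm_pow, hz]; norm_num

theorem two_mul_mul_one_sub_le_sin_pi_mul {x : ℝ} (hx₀ : 0 ≤ x) (hx₁ : x ≤ 1) :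
    2 * x * (1 - x) ≤ sin (π * x) := by
  have jordan : ∀ y, 0 ≤ y → y ≤ 1 / 2 → 2 * y ≤ sin (π * y) := fun y hy₀ hy₁ => by
    have := mul_le_sin (x := π * y) (by positivity) (by nlinarith [pi_pos])
    rwa [← mul_assoc, div_mul_cancel₀ _ pi_ne_zero] at this
  rcases le_total x (1 / 2) with hx | hx
  · nlinarith [jordan x hx₀ hx]
  · have := jordan (1 - x) (by linarith) (by linarith)
    rw [mul_one_sub π, sin_pi_sub] at this
    nlinarith

theorem conj_pow_mul_pow_eq_pow_sub {m : ℕ} [NeZero m] {ζ : ℂ} (hζ : ζ ^ m = 1) (a b : Fin m) :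
    starRingEnd ℂ (ζ ^ (a : ℕ)) * ζ ^ (b : ℕ) = ζ ^ ((b - a : Fin m) : ℕ) := by
  have hnorm : ‖ζ ^ (a : ℕ)‖ = 1 := by
    rw [norm_pow, Complex.norm_eq_one_of_pow_eq_one hζ (NeZero.ne m), one_pow]
  have hb : ζ ^ (b : ℕ) = ζ ^ ((b - a : Fin m) : ℕ) * ζ ^ (a : ℕ) := by
    conv_lhs => rw [← sub_add_cancel b a, Fin.val_add, ← pow_eq_pow_mod _ hζ]
    rw [pow_add]
  rw [hb, mul_left_comm, Complex.conj_mul', hnorm]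
  simp

theorem sum_Ico_inv_two_mul_add_inv_two_mul_sub_le (m : ℕ) :
    ∑ d ∈ Ico 1 m, (1 / (2 * (d : ℝ)) + 1 / (2 * ((m : ℝ) - d))) ≤ 1 + log m := by
  have hreflect :
      ∑ d ∈ Ico 1 m, 1 / (2 * ((m : ℝ) - d)) = ∑ d ∈ Ico 1 m, 1 / (2 * (d : ℝ)) := by
    have := sum_Ico_reflect (fun d : ℕ => 1 / (2 * (d : ℝ))) 1 (Nat.le_succ m)
    rw [Nat.add_sub_cancel_left, Nat.add_sub_cancel] at this
    rw [← this]
    refine sum_congr rfl fun d hd => ?_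
    rw [Nat.cast_sub (mem_Ico.mp hd).2.le]
  calc ∑ d ∈ Ico 1 m, (1 / (2 * (d : ℝ)) + 1 / (2 * ((m : ℝ) - d)))
      = ∑ d ∈ Ico 1 m, (d : ℝ)⁻¹ := by
        rw [sum_add_distrib, hreflect, ← sum_add_distrib]
        exact sum_congr rfl fun d _ => by ring
    _ ≤ ∑ d ∈ Icc 1 m, (d : ℝ)⁻¹ :=
        sum_le_sum_of_subset_of_nonneg Ico_subset_Icc_self fun _ _ _ => by positivity
    _ = harmonic m := by
        simp only [harmonic_eq_sum_Icc, Rat.cast_sum, Rat.cast_inv, Rat.cast_natCast]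
    _ ≤ 1 + log m := harmonic_le_one_add_log m

namespace BlindDeconv

def dftRoot (m : ℕ) : ℂ := Complex.exp (2 * π * Complex.I / m)

theorem dftRoot_pow_eq_exp (m d : ℕ) :
    dftRoot m ^ d = Complex.exp (Complex.I * ↑(2 * π * (d / m))) := by
  rw [dftRoot, ← Complex.exp_nat_mul]
  push_cast
  ring_nf

theorem dftRoot_pow_self (m : ℕ) [NeZero m] : dftRoot m ^ m = 1 :=
  (Complex.isPrimitiveRoot_exp m (NeZero.ne m)).pow_eq_one

theorem norm_dftRoot_pow_sub_one (m d : ℕ) :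
    ‖dftRoot m ^ d - 1‖ = 2 * |sin (π * (d / m))| := by
  rw [dftRoot_pow_eq_exp, Complex.norm_exp_I_mul_ofReal_sub_one, norm_mul, Real.norm_two,
    Real.norm_eq_abs, mul_div_right_comm, mul_div_cancel_left₀ _ two_ne_zero]

theorem dftB_eq_pow (m K : ℕ) (j : Fin m) (i : Fin K) :
    dftB m K j i = (Real.sqrt m : ℂ)⁻¹ * (dftRoot m ^ (j : ℕ)) ^ (i : ℕ) := by
  rw [dftB, dftRoot, ← pow_mul, ← Complex.exp_nat_mul]
  push_cast
  ring_nf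

theorem cdot_dftB (m K : ℕ) [NeZero m] (l j : Fin m) :
    cdot (dftB m K l) (dftB m K j) =
      (m : ℂ)⁻¹ * ∑ i ∈ range K, (dftRoot m ^ ((j - l : Fin m) : ℕ)) ^ i := by
  have hsqrt : starRingEnd ℂ (Real.sqrt m : ℂ)⁻¹ * (Real.sqrt m : ℂ)⁻¹ = (m : ℂ)⁻¹ := by
    rw [map_inv₀, Complex.conj_ofReal, ← mul_inv, ← Complex.ofReal_mul,
      Real.mul_self_sqrt m.cast_nonneg, Complex.ofReal_natCast]
  simp only [cdot, dftB_eq_pow, map_mul, map_pow]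
  rw [mul_sum, ← Fin.sum_univ_eq_sum_range]
  refine sum_congr rfl fun i _ => ?_
  rw [← conj_pow_mul_pow_eq_pow_sub (dftRoot_pow_self m), mul_pow, ← hsqrt, map_pow]
  ring

theorem norm_geom_sum_dftRoot_pow_div_le {m d : ℕ} (hd₀ : 0 < d) (hdm : d < m) (K : ℕ) :
    ‖∑ i ∈ range K, (dftRoot m ^ d) ^ i‖ / m ≤ 1 / (2 * d) + 1 / (2 * ((m : ℝ) - d)) := by
  have hm : (0 : ℝ) < m := by exact_mod_cast hd₀.trans hdm
  have hd : (0 : ℝ) < d := by exact_mod_cast hd₀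
  have hdm' : (d : ℝ) < m := by exact_mod_cast hdm
  have hsin : 2 * (d / m) * (1 - d / m) ≤ sin (π * (d / m)) :=
    two_mul_mul_one_sub_le_sin_pi_mul (by positivity) ((div_le_one hm).mpr hdm'.le)
  have hpos : 0 < 2 * (d / m) * (1 - d / m : ℝ) := by
    have : (d / m : ℝ) < 1 := (div_lt_one hm).mpr hdm'
    have : (0 : ℝ) < d / m := by positivity
    nlinarith
  have hdist : ‖dftRoot m ^ d - 1‖ = 2 * sin (π * (d / m)) := by
    rw [norm_dftRoot_pow_sub_one, abs_of_pos (hpos.trans_le hsin)]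
  have hne : dftRoot m ^ d ≠ 1 := fun h => by
    rw [h, sub_self, norm_zero] at hdist
    linarith
  have hunit : ‖dftRoot m ^ d‖ = 1 := by
    rw [dftRoot_pow_eq_exp, Complex.norm_exp_I_mul_ofReal]
  calc ‖∑ i ∈ range K, (dftRoot m ^ d) ^ i‖ / m
      ≤ 2 / (2 * sin (π * (d / m))) / m := by
        gcongr
        exact hdist ▸ norm_geom_sum_le_of_norm_eq_one hunit hne K
    _ ≤ 2 / (2 * (2 * (d / m) * (1 - d / m))) / m := by gcongr
    _ = 1 / (2 * d) + 1 / (2 * ((m : ℝ) - d)) := by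
        have : (m : ℝ) - d ≠ 0 := by linarith
        field_simp
        ring

/-- Lemma: column-correlation bound for the partial DFT design:
`Σ_j |b_lᴴ b_j| ≤ 4 log m` for every `l`, whenever `m ≥ 3`. -/
theorem statement5 (m K : ℕ) (hm : 3 ≤ m) (hKm : K ≤ m) (l : Fin m) :
    ∑ j : Fin m, ‖cdot (dftB m K l) (dftB m K j)‖ ≤ 4 * Real.log m := by
  have : NeZero m := ⟨by omega⟩
  have hm₀ : (0 : ℝ) < m := by exact_mod_cast NeZero.pos m
  set g : ℕ → ℝ := fun d => ‖∑ i ∈ range K, (dftRoot m ^ d) ^ i‖ / m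
  have hcorr : ∀ j, ‖cdot (dftB m K l) (dftB m K j)‖ = g ((j - l : Fin m) : ℕ) := fun j => by
    rw [cdot_dftB, norm_mul, norm_inv, Complex.norm_natCast, inv_mul_eq_div]
  have hreindex : ∑ j : Fin m, g ((j - l : Fin m) : ℕ) = g 0 + ∑ d ∈ Ico 1 m, g d := by
    rw [Fintype.sum_equiv (Equiv.subRight l) (fun j => g ((j - l : Fin m) : ℕ))
        (fun d => g d) fun _ => rfl,
      Fin.sum_univ_eq_sum_range, range_eq_Ico, sum_eq_sum_Ico_succ_bot (NeZero.pos m)]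
  have hdiag : g 0 ≤ 1 := by
    simp only [g, pow_zero, one_pow, sum_const, card_range, nsmul_eq_mul, mul_one,
      Complex.norm_natCast]
    exact (div_le_one hm₀).mpr (by exact_mod_cast hKm)
  have hoff : ∑ d ∈ Ico 1 m, g d ≤ 1 + log m :=
    (sum_le_sum fun d hd =>
        norm_geom_sum_dftRoot_pow_div_le (mem_Ico.mp hd).1 (mem_Ico.mp hd).2 K).trans
      (sum_Ico_inv_two_mul_add_inv_two_mul_sub_le m)
  have hlog : 1 ≤ log m := by
    have h3 : (3 : ℝ) ≤ m := by exact_mod_cast hm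
    rw [Real.le_log_iff_exp_le hm₀]
    linarith [Real.exp_one_lt_three]
  rw [sum_congr rfl fun j _ => hcorr j, hreindex]
  linarith

end BlindDeconv
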